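/- arXiv:2407.00692 — 5 statements merged into one kernel-verified Lean document; each statement's English description precedes it below -/
import Mathlib

section
/- (Theorem 2.3, cross-multiplied form.) Let τ ∈ ℂ with 0 < Im τ, θ(z) := jacobiTheta₂(z + 1/2, τ), and L := ℤ + ℤτ. Fix positive integers n, a₁, …, a_m, b₁, …, b_l and linear forms f_i(x) = ∑_{r=1}^n c_{ir} x_r (1 ≤ i ≤ m), g_j(x) = ∑_{s=1}^n d_{js} x_s (1 ≤ j ≤ l) with integer coefficients, such that ∑_{i=1}^m a_i f_i(x)² = ∑_{j=1}^l b_j g_j(x)² for all x ∈ ℂⁿ. Then for every λ ∈ Lⁿ and every x ∈ ℂⁿ: ∏_{i=1}^m θ(f_i(x + λ))^{a_i} · ∏_{j=1}^l θ(g_j(x))^{b_j} = ∏_{i=1}^m θ(f_i(x))^{a_i} · ∏_{j=1}^l θ(g_j(x + λ))^{b_j}. (This expresses that the quotient ∏_i θ(f_i)^{a_i} / ∏_j θ(g_j)^{b_j} is invariant under translation by Lⁿ, i.e., descends to a rational function on Eⁿ ≅ (ℂ/L)ⁿ.) -/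
/-!
Translating `z` by `p + kτ` multiplies `θ(z) = ϑ(z + 1/2, τ)` by `exp(-πi(k²τ + 2kz + k))`, and
since `k ≡ k² (mod 2)` this equals `exp(-πi(k²τ + (z + k)² - z²))`. For a product
`∏ θ(f_i(x))^(a_i)` and `λ = p + qτ ∈ Lⁿ`, the factors multiply to
`exp(-πi(τ Q(q) + Q(x + q) - Q(x)))` with `Q = ∑ a_i f_i²`, so the automorphy factor of the
product depends only on the quadratic form `Q`. Two products with the same `Q` therefore
transform alike, and their quotient is `Lⁿ`-periodic.
-/

open Complex Real

lemma jacobiTheta₂_add_int_mul (k : ℤ) (z τ : ℂ) :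
    jacobiTheta₂ (z + k * τ) τ = cexp (-π * I * (k ^ 2 * τ + 2 * k * z)) * jacobiTheta₂ z τ := by
  induction k generalizing z with
  | zero => simp
  | succ k ih =>
    rw [show z + ((k + 1 : ℤ) : ℂ) * τ = (z + τ) + (k : ℤ) * τ by push_cast; ring, ih,
      jacobiTheta₂_add_left', ← mul_assoc, ← Complex.exp_add]
    congr 2
    push_cast
    ring
  | pred k ih =>
    have hτ := jacobiTheta₂_add_left' (z - τ) τ
    rw [sub_add_cancel] at hτ
    rw [show z + ((-k - 1 : ℤ) : ℂ) * τ = (z - τ) + ((-k : ℤ) : ℂ) * τ by push_cast; ring, ih, hτ,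
      ← mul_assoc, ← Complex.exp_add]
    congr 2
    push_cast
    ring

lemma jacobiTheta₂_add_int_add_int_mul (p k : ℤ) (z τ : ℂ) :
    jacobiTheta₂ (z + p + k * τ) τ =
      cexp (-π * I * (k ^ 2 * τ + 2 * k * z)) * jacobiTheta₂ z τ := by
  have hper : Function.Periodic (jacobiTheta₂ · τ) 1 := (jacobiTheta₂_add_left · τ)
  have hp := hper.int_mul p (z + k * τ)
  simp only [mul_one] at hp
  rw [add_right_comm, hp, jacobiTheta₂_add_int_mul]

lemma jacobiTheta₂_add_half_add_lattice (p k : ℤ) (z τ : ℂ) :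
    jacobiTheta₂ (z + p + k * τ + 1 / 2) τ =
      cexp (-π * I * (k ^ 2 * τ + (z + k) ^ 2 - z ^ 2)) * jacobiTheta₂ (z + 1 / 2) τ := by
  obtain ⟨m, hm⟩ := Int.even_mul_pred_self k
  have hmC : (k : ℂ) * (k - 1) = m + m := by exact_mod_cast hm
  rw [show z + p + k * τ + 1 / 2 = (z + 1 / 2) + p + k * τ by ring,
    jacobiTheta₂_add_int_add_int_mul,
    show -π * I * (k ^ 2 * τ + 2 * k * (z + 1 / 2)) =
      -π * I * (k ^ 2 * τ + (z + k) ^ 2 - z ^ 2) + m * (2 * π * I) by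
      linear_combination (π * I) * hmC,
    Complex.exp_add, Complex.exp_int_mul_two_pi_mul_I, mul_one]

section LinearForms

variable {σ ι : Type*} [Fintype σ] [Fintype ι]

lemma sum_intCast_mul_add_lattice (c : σ → ℤ) {τ : ℂ} {x lam : σ → ℂ} {p q : σ → ℤ}
    (hlam : ∀ r, lam r = p r + q r * τ) :
    ∑ r, (c r : ℂ) * (x r + lam r) =
      ∑ r, (c r : ℂ) * x r + ((∑ r, c r * p r : ℤ) : ℂ) + ((∑ r, c r * q r : ℤ) : ℂ) * τ := by
  simp only [hlam, Int.cast_sum, Int.cast_mul, Finset.sum_mul, ← Finset.sum_add_distrib]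
  exact Finset.sum_congr rfl fun r _ => by ring

lemma jacobiTheta₂_linearForm_add_lattice (c : σ → ℤ) {τ : ℂ} {x lam : σ → ℂ} {p q : σ → ℤ}
    (hlam : ∀ r, lam r = p r + q r * τ) :
    jacobiTheta₂ (∑ r, (c r : ℂ) * (x r + lam r) + 1 / 2) τ =
      cexp (-π * I * ((∑ r, (c r : ℂ) * q r) ^ 2 * τ + (∑ r, (c r : ℂ) * (x r + q r)) ^ 2 -
        (∑ r, (c r : ℂ) * x r) ^ 2)) * jacobiTheta₂ (∑ r, (c r : ℂ) * x r + 1 / 2) τ := by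
  rw [sum_intCast_mul_add_lattice c hlam, jacobiTheta₂_add_half_add_lattice]
  simp only [Int.cast_sum, Int.cast_mul, mul_add, Finset.sum_add_distrib]

noncomputable def thetaProduct (τ : ℂ) (a : ι → ℕ) (c : ι → σ → ℤ) (x : σ → ℂ) : ℂ :=
  ∏ i, jacobiTheta₂ ((∑ r, (c i r : ℂ) * x r) + 1 / 2) τ ^ a i

def weightedSumSq (a : ι → ℕ) (c : ι → σ → ℤ) (x : σ → ℂ) : ℂ :=
  ∑ i, (a i : ℂ) * (∑ r, (c i r : ℂ) * x r) ^ 2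

lemma thetaProduct_add_lattice (τ : ℂ) (a : ι → ℕ) (c : ι → σ → ℤ) {x lam : σ → ℂ}
    {p q : σ → ℤ} (hlam : ∀ r, lam r = p r + q r * τ) :
    thetaProduct τ a c (x + lam) =
      cexp (-π * I * (weightedSumSq a c (fun r => (q r : ℂ)) * τ +
        weightedSumSq a c (x + fun r => (q r : ℂ)) - weightedSumSq a c x)) *
        thetaProduct τ a c x := by
  simp only [thetaProduct, weightedSumSq, Pi.add_apply, jacobiTheta₂_linearForm_add_lattice _ hlam,
    mul_pow, Finset.prod_mul_distrib, ← Complex.exp_nat_mul, ← Complex.exp_sum]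
  congr 2
  simp only [Finset.mul_sum, Finset.sum_mul, ← Finset.sum_add_distrib, ← Finset.sum_sub_distrib]
  exact Finset.sum_congr rfl fun i _ => by ring

end LinearForms

theorem theta_quotient_lattice_invariant_cross_general (τ : ℂ)
    (n m l : ℕ)
    (a : Fin m → ℕ) (b : Fin l → ℕ)
    (c : Fin m → Fin n → ℤ) (d : Fin l → Fin n → ℤ)
    (h : ∀ x : Fin n → ℂ,
      ∑ i, (a i : ℂ) * (∑ r, (c i r : ℂ) * x r) ^ 2 =
        ∑ j, (b j : ℂ) * (∑ s, (d j s : ℂ) * x s) ^ 2)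
    (lam : Fin n → ℂ) (hlam : ∀ r, ∃ p q : ℤ, lam r = (p : ℂ) + (q : ℂ) * τ)
    (x : Fin n → ℂ) :
    (∏ i, (jacobiTheta₂ ((∑ r, (c i r : ℂ) * (x r + lam r)) + 1 / 2) τ) ^ (a i)) *
      (∏ j, (jacobiTheta₂ ((∑ s, (d j s : ℂ) * x s) + 1 / 2) τ) ^ (b j)) =
    (∏ i, (jacobiTheta₂ ((∑ r, (c i r : ℂ) * x r) + 1 / 2) τ) ^ (a i)) *
      (∏ j, (jacobiTheta₂ ((∑ s, (d j s : ℂ) * (x s + lam s)) + 1 / 2) τ) ^ (b j)) := by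
  choose p q hpq using hlam
  have hQ : weightedSumSq a c = weightedSumSq b d := funext h
  change thetaProduct τ a c (x + lam) * thetaProduct τ b d x =
    thetaProduct τ a c x * thetaProduct τ b d (x + lam)
  rw [thetaProduct_add_lattice τ a c hpq, thetaProduct_add_lattice τ b d hpq, hQ]
  ring

/-- Theorem 2.3, cross-multiplied form. Let `θ(z) := jacobiTheta₂ (z + 1/2) τ`
and `L = ℤ + ℤτ`. If `∑_i a_i f_i(x)² = ∑_j b_j g_j(x)²` as quadratic forms on `ℂⁿ`, where
`f_i, g_j` are linear forms with integer coefficients and `a_i, b_j` positive integers, then for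
every `λ ∈ Lⁿ` and `x ∈ ℂⁿ`:
`∏_i θ(f_i(x+λ))^(a_i) · ∏_j θ(g_j(x))^(b_j) = ∏_i θ(f_i(x))^(a_i) · ∏_j θ(g_j(x+λ))^(b_j)`. -/
theorem theta_quotient_lattice_invariant_cross (τ : ℂ) (hτ : 0 < τ.im)
    (n m l : ℕ) (hn : 0 < n) (hm : 0 < m) (hl : 0 < l)
    (a : Fin m → ℕ) (b : Fin l → ℕ) (ha : ∀ i, 0 < a i) (hb : ∀ j, 0 < b j)
    (c : Fin m → Fin n → ℤ) (d : Fin l → Fin n → ℤ)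
    (h : ∀ x : Fin n → ℂ,
      ∑ i, (a i : ℂ) * (∑ r, (c i r : ℂ) * x r) ^ 2 =
        ∑ j, (b j : ℂ) * (∑ s, (d j s : ℂ) * x s) ^ 2)
    (lam : Fin n → ℂ) (hlam : ∀ r, ∃ p q : ℤ, lam r = (p : ℂ) + (q : ℂ) * τ)
    (x : Fin n → ℂ) :
    (∏ i, (jacobiTheta₂ ((∑ r, (c i r : ℂ) * (x r + lam r)) + 1 / 2) τ) ^ (a i)) *
      (∏ j, (jacobiTheta₂ ((∑ s, (d j s : ℂ) * x s) + 1 / 2) τ) ^ (b j)) =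
    (∏ i, (jacobiTheta₂ ((∑ r, (c i r : ℂ) * x r) + 1 / 2) τ) ^ (a i)) *
      (∏ j, (jacobiTheta₂ ((∑ s, (d j s : ℂ) * (x s + lam s)) + 1 / 2) τ) ^ (b j)) :=
  theta_quotient_lattice_invariant_cross_general τ n m l a b c d h lam hlam x
end

section
/- (Theorem 2.3, quotient form.) Let τ ∈ ℂ with 0 < Im τ, θ(z) := jacobiTheta₂(z + 1/2, τ), and L := ℤ + ℤτ. Fix positive integers n, a₁, …, a_m, b₁, …, b_l and linear forms f_i(x) = ∑_{r=1}^n c_{ir} x_r (1 ≤ i ≤ m), g_j(x) = ∑_{s=1}^n d_{js} x_s (1 ≤ j ≤ l) with integer coefficients, such that ∑_{i=1}^m a_i f_i(x)² = ∑_{j=1}^l b_j g_j(x)² for all x ∈ ℂⁿ. Define F(x) := ∏_{i=1}^m θ(f_i(x))^{a_i} / ∏_{j=1}^l θ(g_j(x))^{b_j}. Then for every λ ∈ Lⁿ and every x ∈ ℂⁿ such that ∏_{j=1}^l θ(g_j(x))^{b_j} ≠ 0 and ∏_{j=1}^l θ(g_j(x + λ))^{b_j} ≠ 0, one has F(x +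 λ) = F(x). -/
open Complex

open Real


lemma theta_shift (τ z : ℂ) (P Q : ℤ) :
    jacobiTheta₂ (z + ((P : ℂ) + (Q : ℂ) * τ)) τ =
      cexp (-((π : ℂ) * I) * ((Q : ℂ) ^ 2 * τ + 2 * (Q : ℂ) * z)) * jacobiTheta₂ z τ := by
  conv_rhs => rw [jacobiTheta₂, ← tsum_mul_left, ← (Equiv.addRight Q).tsum_eq]
  refine tsum_congr fun k ↦ ?_
  simp only [jacobiTheta₂_term, Equiv.coe_addRight, ← Complex.exp_add]
  rw [show 2 * (π : ℂ) * I * (k : ℂ) * (z + ((P : ℂ) + (Q : ℂ) * τ)) + (π : ℂ) * I * (k : ℂ) ^ 2 * τ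
      = ((k * P : ℤ) : ℂ) * (2 * (π : ℂ) * I) +
        (-((π : ℂ) * I) * ((Q : ℂ) ^ 2 * τ + 2 * (Q : ℂ) * z) +
          (2 * (π : ℂ) * I * ((k + Q : ℤ) : ℂ) * z + (π : ℂ) * I * ((k + Q : ℤ) : ℂ) ^ 2 * τ)) by
    push_cast; ring]
  rw [Complex.exp_add, Complex.exp_int_mul_two_pi_mul_I, one_mul]

lemma sum_sq_expand {N : ℕ} (w : Fin N → ℕ) (u v : Fin N → ℂ) :
    ∑ i, (w i : ℂ) * (u i + v i) ^ 2 =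
      ∑ i, (w i : ℂ) * u i ^ 2 + 2 * ∑ i, (w i : ℂ) * v i * u i + ∑ i, (w i : ℂ) * v i ^ 2 := by
  rw [Finset.mul_sum, ← Finset.sum_add_distrib, ← Finset.sum_add_distrib]
  exact Finset.sum_congr rfl fun i _ ↦ by ring

lemma exp_factor {N : ℕ} (w : Fin N → ℕ) (Q : Fin N → ℤ) (u : Fin N → ℂ) (τ : ℂ) :
    ∑ i, (w i : ℂ) * (-((π : ℂ) * I) * ((Q i : ℂ) ^ 2 * τ + 2 * (Q i : ℂ) * (u i + 1 / 2))) =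
      -((π : ℂ) * I) * (τ * ∑ i, (w i : ℂ) * (Q i : ℂ) ^ 2
        + 2 * ∑ i, (w i : ℂ) * (Q i : ℂ) * u i + ∑ i, (w i : ℂ) * (Q i : ℂ)) := by
  have step : ∀ i ∈ Finset.univ,
      (w i : ℂ) * (-((π : ℂ) * I) * ((Q i : ℂ) ^ 2 * τ + 2 * (Q i : ℂ) * (u i + 1 / 2)))
      = (-((π : ℂ) * I) * τ) * ((w i : ℂ) * (Q i : ℂ) ^ 2)
        + (-((π : ℂ) * I) * 2) * ((w i : ℂ) * (Q i : ℂ) * u i)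
        + (-((π : ℂ) * I)) * ((w i : ℂ) * (Q i : ℂ)) := fun i _ ↦ by ring
  rw [Finset.sum_congr rfl step, Finset.sum_add_distrib, Finset.sum_add_distrib,
    ← Finset.mul_sum, ← Finset.mul_sum, ← Finset.mul_sum]
  ring

/-- Theorem 2.3, quotient form. Let `θ(z) := jacobiTheta₂ (z + 1/2) τ` and
`L = ℤ + ℤτ`. If `∑_i a_i f_i(x)² = ∑_j b_j g_j(x)²` as quadratic forms on `ℂⁿ`, then
`F(x) := ∏_i θ(f_i(x))^(a_i) / ∏_j θ(g_j(x))^(b_j)` satisfies `F(x + λ) = F(x)` for every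
`λ ∈ Lⁿ` and every `x` where both denominators are nonzero. -/
theorem theta_quotient_lattice_invariant (τ : ℂ) (hτ : 0 < τ.im)
    (n m l : ℕ) (hn : 0 < n) (hm : 0 < m) (hl : 0 < l)
    (a : Fin m → ℕ) (b : Fin l → ℕ) (ha : ∀ i, 0 < a i) (hb : ∀ j, 0 < b j)
    (c : Fin m → Fin n → ℤ) (d : Fin l → Fin n → ℤ)
    (h : ∀ x : Fin n → ℂ,
      ∑ i, (a i : ℂ) * (∑ r, (c i r : ℂ) * x r) ^ 2 =
        ∑ j, (b j : ℂ) * (∑ s, (d j s : ℂ) * x s) ^ 2)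
    (lam : Fin n → ℂ) (hlam : ∀ r, ∃ p q : ℤ, lam r = (p : ℂ) + (q : ℂ) * τ)
    (x : Fin n → ℂ)
    (hx : (∏ j, (jacobiTheta₂ ((∑ s, (d j s : ℂ) * x s) + 1 / 2) τ) ^ (b j)) ≠ 0)
    (hxlam : (∏ j, (jacobiTheta₂ ((∑ s, (d j s : ℂ) * (x s + lam s)) + 1 / 2) τ) ^ (b j)) ≠ 0) :
    (∏ i, (jacobiTheta₂ ((∑ r, (c i r : ℂ) * (x r + lam r)) + 1 / 2) τ) ^ (a i)) /
      (∏ j, (jacobiTheta₂ ((∑ s, (d j s : ℂ) * (x s + lam s)) + 1 / 2) τ) ^ (b j)) =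
    (∏ i, (jacobiTheta₂ ((∑ r, (c i r : ℂ) * x r) + 1 / 2) τ) ^ (a i)) /
      (∏ j, (jacobiTheta₂ ((∑ s, (d j s : ℂ) * x s) + 1 / 2) τ) ^ (b j)) := by
  choose p q hpq using hlam
  -- linear form shift identity
  have lin : ∀ (e : Fin n → ℤ), (∑ r, (e r : ℂ) * (x r + lam r)) + 1 / 2
      = ((∑ r, (e r : ℂ) * x r) + 1 / 2) + (((∑ r, e r * p r : ℤ) : ℂ)
          + ((∑ r, e r * q r : ℤ) : ℂ) * τ) := by
    intro e
    have : ∀ r ∈ Finset.univ, (e r : ℂ) * (x r + lam r)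
        = (e r : ℂ) * x r + ((e r : ℂ) * (p r : ℂ) + ((e r : ℂ) * (q r : ℂ)) * τ) := by
      intro r _; rw [hpq r]; ring
    rw [Finset.sum_congr rfl this, Finset.sum_add_distrib, Finset.sum_add_distrib,
      ← Finset.sum_mul]
    push_cast
    ring
  have hQa : ∀ i, ((∑ r, c i r * q r : ℤ) : ℂ) = ∑ r, (c i r : ℂ) * (q r : ℂ) := by
    intro i; push_cast; rfl
  have hQb : ∀ j, ((∑ s, d j s * q s : ℤ) : ℂ) = ∑ s, (d j s : ℂ) * (q s : ℂ) := by
    intro j; push_cast; rfl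
  -- numerator transformation
  have hnum : (∏ i, (jacobiTheta₂ ((∑ r, (c i r : ℂ) * (x r + lam r)) + 1 / 2) τ) ^ (a i))
      = cexp (∑ i, (a i : ℂ) * (-((π : ℂ) * I) * (((∑ r, c i r * q r : ℤ) : ℂ) ^ 2 * τ
          + 2 * ((∑ r, c i r * q r : ℤ) : ℂ) * ((∑ r, (c i r : ℂ) * x r) + 1 / 2))))
        * ∏ i, (jacobiTheta₂ ((∑ r, (c i r : ℂ) * x r) + 1 / 2) τ) ^ (a i) := by
    rw [Complex.exp_sum, ← Finset.prod_mul_distrib]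
    refine Finset.prod_congr rfl fun i _ ↦ ?_
    rw [lin (c i), theta_shift, mul_pow, ← Complex.exp_nat_mul]
  have hden : (∏ j, (jacobiTheta₂ ((∑ s, (d j s : ℂ) * (x s + lam s)) + 1 / 2) τ) ^ (b j))
      = cexp (∑ j, (b j : ℂ) * (-((π : ℂ) * I) * (((∑ s, d j s * q s : ℤ) : ℂ) ^ 2 * τ
          + 2 * ((∑ s, d j s * q s : ℤ) : ℂ) * ((∑ s, (d j s : ℂ) * x s) + 1 / 2))))
        * ∏ j, (jacobiTheta₂ ((∑ s, (d j s : ℂ) * x s) + 1 / 2) τ) ^ (b j) := by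
    rw [Complex.exp_sum, ← Finset.prod_mul_distrib]
    refine Finset.prod_congr rfl fun j _ ↦ ?_
    rw [lin (d j), theta_shift, mul_pow, ← Complex.exp_nat_mul]
  -- quadratic form identities
  have h1 : ∑ i, (a i : ℂ) * ((∑ r, c i r * q r : ℤ) : ℂ) ^ 2
      = ∑ j, (b j : ℂ) * ((∑ s, d j s * q s : ℤ) : ℂ) ^ 2 := by
    simpa only [hQa, hQb] using h (fun r ↦ (q r : ℂ))
  have h2 : ∑ i, (a i : ℂ) * ((∑ r, c i r * q r : ℤ) : ℂ) * (∑ r, (c i r : ℂ) * x r)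
      = ∑ j, (b j : ℂ) * ((∑ s, d j s * q s : ℤ) : ℂ) * (∑ s, (d j s : ℂ) * x s) := by
    have hA := h (fun r ↦ x r + (q r : ℂ))
    have hsplit : ∀ i, ∑ r, (c i r : ℂ) * (x r + (q r : ℂ))
        = (∑ r, (c i r : ℂ) * x r) + ((∑ r, c i r * q r : ℤ) : ℂ) := by
      intro i; rw [hQa, ← Finset.sum_add_distrib]
      exact Finset.sum_congr rfl fun r _ ↦ by ring
    have hsplit' : ∀ j, ∑ s, (d j s : ℂ) * (x s + (q s : ℂ))
        = (∑ s, (d j s : ℂ) * x s) + ((∑ s, d j s * q s : ℤ) : ℂ) := by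
      intro j; rw [hQb, ← Finset.sum_add_distrib]
      exact Finset.sum_congr rfl fun s _ ↦ by ring
    simp only [hsplit, hsplit'] at hA
    rw [sum_sq_expand, sum_sq_expand] at hA
    have hx0 := h x
    linear_combination (hA - hx0 - h1) / 2
  -- parity
  have hZ : (∑ i, (a i : ℤ) * (∑ r, c i r * q r) ^ 2)
      = ∑ j, (b j : ℤ) * (∑ s, d j s * q s) ^ 2 := by
    exact_mod_cast h1
  have hpar : (2 : ℤ) ∣ (∑ j, (b j : ℤ) * (∑ s, d j s * q s))
      - (∑ i, (a i : ℤ) * (∑ r, c i r * q r)) := by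
    have h2m : ((∑ i, (a i : ℤ) * (∑ r, c i r * q r) : ℤ) : ZMod 2)
        = ((∑ j, (b j : ℤ) * (∑ s, d j s * q s) : ℤ) : ZMod 2) := by
      have := congrArg (Int.cast : ℤ → ZMod 2) hZ
      push_cast at this ⊢
      have hsq : ∀ y : ZMod 2, y ^ 2 = y := fun y ↦ ZMod.pow_card y
      simpa only [hsq] using this
    have := Int.ModEq.dvd ((ZMod.intCast_eq_intCast_iff _ _ _).mp h2m)
    exact_mod_cast this
  obtain ⟨k, hk⟩ := hpar
  have hkC : (∑ j, (b j : ℂ) * ((∑ s, d j s * q s : ℤ) : ℂ))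
      = (∑ i, (a i : ℂ) * ((∑ r, c i r * q r : ℤ) : ℂ)) + 2 * (k : ℂ) := by
    have := congrArg (Int.cast : ℤ → ℂ) hk
    push_cast at this ⊢
    linear_combination this
  rw [hnum, hden,
    exp_factor a (fun i ↦ ∑ r, c i r * q r) (fun i ↦ ∑ r, (c i r : ℂ) * x r) τ,
    exp_factor b (fun j ↦ ∑ s, d j s * q s) (fun j ↦ ∑ s, (d j s : ℂ) * x s) τ,
    h1, h2, hkC]
  rw [show -((π : ℂ) * I) * (τ * ∑ j, (b j : ℂ) * ((∑ s, d j s * q s : ℤ) : ℂ) ^ 2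
      + 2 * ∑ j, (b j : ℂ) * ((∑ s, d j s * q s : ℤ) : ℂ) * (∑ s, (d j s : ℂ) * x s)
      + ((∑ i, (a i : ℂ) * ((∑ r, c i r * q r : ℤ) : ℂ)) + 2 * (k : ℂ)))
    = ((-k : ℤ) : ℂ) * (2 * (π : ℂ) * I)
      + -((π : ℂ) * I) * (τ * ∑ j, (b j : ℂ) * ((∑ s, d j s * q s : ℤ) : ℂ) ^ 2
      + 2 * ∑ j, (b j : ℂ) * ((∑ s, d j s * q s : ℤ) : ℂ) * (∑ s, (d j s : ℂ) * x s)
      + (∑ i, (a i : ℂ) * ((∑ r, c i r * q r : ℤ) : ℂ))) from by push_cast; ring]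
  rw [Complex.exp_add, Complex.exp_int_mul_two_pi_mul_I, one_mul]
  exact mul_div_mul_left _ _ (Complex.exp_ne_zero _)
end

section
/- In the exterior algebra Λ over ℚ on generators α₁, β₁, …, α_{2n}, β_{2n}, for any three pairwise distinct indices i, j, k in {1, …, 2n} one has the identity P_i ∧ D_{jk} + D_{ij} ∧ D_{ik} = 0, where P_i := α_i ∧ β_i and D_{rs} := α_r ∧ β_s − β_r ∧ α_s. -/
lemma eg_key {Λ : Type*} [Ring Λ] (A B C D E F : Λ)
    (hAA : A * A = 0) (hBB : B * B = 0)
    (hBA : B * A = -(A * B)) (hCA : C * A = -(A * C)) (hCB : C * B = -(B * C))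
    (hDA : D * A = -(A * D)) (hDB : D * B = -(B * D)) :
    A * B * (C * F - D * E) + (A * D - B * C) * (A * F - B * E) = 0 := by
  have sAA : ∀ x : Λ, A * (A * x) = 0 := fun x => by rw [← mul_assoc, hAA, zero_mul]
  have sBB : ∀ x : Λ, B * (B * x) = 0 := fun x => by rw [← mul_assoc, hBB, zero_mul]
  have sBA : ∀ x : Λ, B * (A * x) = -(A * (B * x)) := fun x => by
    rw [← mul_assoc, hBA, neg_mul, mul_assoc]
  have sCA : ∀ x : Λ, C * (A * x) = -(A * (C * x)) := fun x => by
    rw [← mul_assoc, hCA, neg_mul, mul_assoc]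
  have sCB : ∀ x : Λ, C * (B * x) = -(B * (C * x)) := fun x => by
    rw [← mul_assoc, hCB, neg_mul, mul_assoc]
  have sDA : ∀ x : Λ, D * (A * x) = -(A * (D * x)) := fun x => by
    rw [← mul_assoc, hDA, neg_mul, mul_assoc]
  have sDB : ∀ x : Λ, D * (B * x) = -(B * (D * x)) := fun x => by
    rw [← mul_assoc, hDB, neg_mul, mul_assoc]
  simp only [mul_sub, sub_mul, mul_assoc, sDA, sDB, sCA, sCB, sBA, sAA, sBB,
    mul_neg, neg_neg, mul_zero, neg_zero]
  abel

/-- The generator `α_i` (for `i` in `{1, …, 2n}`) of the exterior algebra over `ℚ` on the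
free module with basis `α₁, β₁, …, α_{2n}, β_{2n}`: the image under `ι` of the `i`-th
standard basis vector of `Fin (4n) → ℚ`. -/
noncomputable def egAlpha (n : ℕ) (i : Fin (2 * n)) :
    ExteriorAlgebra ℚ (Fin (4 * n) → ℚ) :=
  ExteriorAlgebra.ι ℚ (Pi.single (Fin.castLE (by omega) i) 1)

/-- The generator `β_i`: the image under `ι` of the `(2n + i)`-th standard basis vector. -/
noncomputable def egBeta (n : ℕ) (i : Fin (2 * n)) :
    ExteriorAlgebra ℚ (Fin (4 * n) → ℚ) :=
  ExteriorAlgebra.ι ℚ (Pi.single (⟨2 * n + i.val, by have := i.isLt; omega⟩ : Fin (4 * n)) 1)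

/-- The class `P_i := α_i ∧ β_i` of the divisor `P_i = {x_i = 0}` on `E^{2n}`. -/
noncomputable def egP (n : ℕ) (i : Fin (2 * n)) : ExteriorAlgebra ℚ (Fin (4 * n) → ℚ) :=
  egAlpha n i * egBeta n i

/-- The class `D_{ij} := α_i ∧ β_j − β_i ∧ α_j` of the divisor `D_{ij} = P_i + P_j − Δ_{ij}`. -/
noncomputable def egD (n : ℕ) (i j : Fin (2 * n)) : ExteriorAlgebra ℚ (Fin (4 * n) → ℚ) :=
  egAlpha n i * egBeta n j - egBeta n i * egAlpha n j

/-- For pairwise distinct `i, j, k` one has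
`P_i ∧ D_{jk} + D_{ij} ∧ D_{ik} = 0` in the exterior algebra. -/
theorem egP_egD_relation (n : ℕ) (hn : 0 < n) (i j k : Fin (2 * n))
    (hij : i ≠ j) (hik : i ≠ k) (hjk : j ≠ k) :
    egP n i * egD n j k + egD n i j * egD n i k = 0 := by
  have swap : ∀ u v : Fin (4 * n) → ℚ,
      ExteriorAlgebra.ι ℚ v * ExteriorAlgebra.ι ℚ u
        = -(ExteriorAlgebra.ι ℚ u * ExteriorAlgebra.ι ℚ v) := fun u v => by
    exact eq_neg_of_add_eq_zero_left (ExteriorAlgebra.ι_add_mul_swap v u)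
  unfold egP egD egAlpha egBeta
  exact eg_key _ _ _ _ _ _ (ExteriorAlgebra.ι_sq_zero _) (ExteriorAlgebra.ι_sq_zero _)
    (swap _ _) (swap _ _) (swap _ _) (swap _ _) (swap _ _)
end

section
/- Let m ≥ 3 and let Λ be the exterior algebra over ℚ on generators α₁, β₁, …, α_{2m}, β_{2m}, with D_{rs} := α_r ∧ β_s − β_r ∧ α_s for distinct r, s. Then ∑_s D_{1 s(1)} ∧ D_{2 s(2)} ∧ ⋯ ∧ D_{m s(m)} = 0, where the sum runs over all bijections s : {1, …, m} → {m+1, …, 2m}. (This is the cohomological realization of the vanishing ∧^m V ≅ 0 for m ≥ 3, Corollary 2.7.) -/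
open ExteriorAlgebra

section Core
variable {M : Type*} [AddCommGroup M] [Module ℚ M]

theorem iSwap (R : Type*) {M : Type*} [CommRing R] [AddCommGroup M] [Module R M] (x y : M) :
    ι R x * ι R y = -(ι R y * ι R x) :=
  eq_neg_of_add_eq_zero_left (ι_add_mul_swap x y)

theorem iSwaps (R : Type*) {M : Type*} [CommRing R] [AddCommGroup M] [Module R M] (x y : M)
    (t : ExteriorAlgebra R M) : ι R x * (ι R y * t) = -(ι R y * (ι R x * t)) := by
  rw [← mul_assoc, iSwap, neg_mul, mul_assoc]

set_option maxHeartbeats 4000000 in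
theorem egCore (p0 q0 p1 q1 p2 q2 xa ya xb yb xc yc : M) :
    (ι ℚ p0 * ι ℚ ya - ι ℚ q0 * ι ℚ xa) * ((ι ℚ p1 * ι ℚ yb - ι ℚ q1 * ι ℚ xb) * (ι ℚ p2 * ι ℚ yc - ι ℚ q2 * ι ℚ xc)) +
      (ι ℚ p0 * ι ℚ yb - ι ℚ q0 * ι ℚ xb) * ((ι ℚ p1 * ι ℚ ya - ι ℚ q1 * ι ℚ xa) * (ι ℚ p2 * ι ℚ yc - ι ℚ q2 * ι ℚ xc)) +
      (ι ℚ p0 * ι ℚ yc - ι ℚ q0 * ι ℚ xc) * ((ι ℚ p1 * ι ℚ yb - ι ℚ q1 * ι ℚ xb) * (ι ℚ p2 * ι ℚ ya - ι ℚ q2 * ι ℚ xa)) +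
      (ι ℚ p0 * ι ℚ ya - ι ℚ q0 * ι ℚ xa) * ((ι ℚ p1 * ι ℚ yc - ι ℚ q1 * ι ℚ xc) * (ι ℚ p2 * ι ℚ yb - ι ℚ q2 * ι ℚ xb)) +
      (ι ℚ p0 * ι ℚ yb - ι ℚ q0 * ι ℚ xb) * ((ι ℚ p1 * ι ℚ yc - ι ℚ q1 * ι ℚ xc) * (ι ℚ p2 * ι ℚ ya - ι ℚ q2 * ι ℚ xa)) +
      (ι ℚ p0 * ι ℚ yc - ι ℚ q0 * ι ℚ xc) * ((ι ℚ p1 * ι ℚ ya - ι ℚ q1 * ι ℚ xa) * (ι ℚ p2 * ι ℚ yb - ι ℚ q2 * ι ℚ xb)) = 0 := by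
  have sw_q0_p0 := iSwaps ℚ q0 p0
  have sw2_q0_p0 := iSwap ℚ q0 p0
  have sw_p1_p0 := iSwaps ℚ p1 p0
  have sw2_p1_p0 := iSwap ℚ p1 p0
  have sw_p1_q0 := iSwaps ℚ p1 q0
  have sw2_p1_q0 := iSwap ℚ p1 q0
  have sw_q1_p0 := iSwaps ℚ q1 p0
  have sw2_q1_p0 := iSwap ℚ q1 p0
  have sw_q1_q0 := iSwaps ℚ q1 q0
  have sw2_q1_q0 := iSwap ℚ q1 q0
  have sw_q1_p1 := iSwaps ℚ q1 p1
  have sw2_q1_p1 := iSwap ℚ q1 p1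
  have sw_p2_p0 := iSwaps ℚ p2 p0
  have sw2_p2_p0 := iSwap ℚ p2 p0
  have sw_p2_q0 := iSwaps ℚ p2 q0
  have sw2_p2_q0 := iSwap ℚ p2 q0
  have sw_p2_p1 := iSwaps ℚ p2 p1
  have sw2_p2_p1 := iSwap ℚ p2 p1
  have sw_p2_q1 := iSwaps ℚ p2 q1
  have sw2_p2_q1 := iSwap ℚ p2 q1
  have sw_q2_p0 := iSwaps ℚ q2 p0
  have sw2_q2_p0 := iSwap ℚ q2 p0
  have sw_q2_q0 := iSwaps ℚ q2 q0
  have sw2_q2_q0 := iSwap ℚ q2 q0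
  have sw_q2_p1 := iSwaps ℚ q2 p1
  have sw2_q2_p1 := iSwap ℚ q2 p1
  have sw_q2_q1 := iSwaps ℚ q2 q1
  have sw2_q2_q1 := iSwap ℚ q2 q1
  have sw_q2_p2 := iSwaps ℚ q2 p2
  have sw2_q2_p2 := iSwap ℚ q2 p2
  have sw_xa_p0 := iSwaps ℚ xa p0
  have sw2_xa_p0 := iSwap ℚ xa p0
  have sw_xa_q0 := iSwaps ℚ xa q0
  have sw2_xa_q0 := iSwap ℚ xa q0
  have sw_xa_p1 := iSwaps ℚ xa p1
  have sw2_xa_p1 := iSwap ℚ xa p1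
  have sw_xa_q1 := iSwaps ℚ xa q1
  have sw2_xa_q1 := iSwap ℚ xa q1
  have sw_xa_p2 := iSwaps ℚ xa p2
  have sw2_xa_p2 := iSwap ℚ xa p2
  have sw_xa_q2 := iSwaps ℚ xa q2
  have sw2_xa_q2 := iSwap ℚ xa q2
  have sw_ya_p0 := iSwaps ℚ ya p0
  have sw2_ya_p0 := iSwap ℚ ya p0
  have sw_ya_q0 := iSwaps ℚ ya q0
  have sw2_ya_q0 := iSwap ℚ ya q0
  have sw_ya_p1 := iSwaps ℚ ya p1
  have sw2_ya_p1 := iSwap ℚ ya p1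
  have sw_ya_q1 := iSwaps ℚ ya q1
  have sw2_ya_q1 := iSwap ℚ ya q1
  have sw_ya_p2 := iSwaps ℚ ya p2
  have sw2_ya_p2 := iSwap ℚ ya p2
  have sw_ya_q2 := iSwaps ℚ ya q2
  have sw2_ya_q2 := iSwap ℚ ya q2
  have sw_ya_xa := iSwaps ℚ ya xa
  have sw2_ya_xa := iSwap ℚ ya xa
  have sw_xb_p0 := iSwaps ℚ xb p0
  have sw2_xb_p0 := iSwap ℚ xb p0
  have sw_xb_q0 := iSwaps ℚ xb q0
  have sw2_xb_q0 := iSwap ℚ xb q0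
  have sw_xb_p1 := iSwaps ℚ xb p1
  have sw2_xb_p1 := iSwap ℚ xb p1
  have sw_xb_q1 := iSwaps ℚ xb q1
  have sw2_xb_q1 := iSwap ℚ xb q1
  have sw_xb_p2 := iSwaps ℚ xb p2
  have sw2_xb_p2 := iSwap ℚ xb p2
  have sw_xb_q2 := iSwaps ℚ xb q2
  have sw2_xb_q2 := iSwap ℚ xb q2
  have sw_xb_xa := iSwaps ℚ xb xa
  have sw2_xb_xa := iSwap ℚ xb xa
  have sw_xb_ya := iSwaps ℚ xb ya
  have sw2_xb_ya := iSwap ℚ xb ya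
  have sw_yb_p0 := iSwaps ℚ yb p0
  have sw2_yb_p0 := iSwap ℚ yb p0
  have sw_yb_q0 := iSwaps ℚ yb q0
  have sw2_yb_q0 := iSwap ℚ yb q0
  have sw_yb_p1 := iSwaps ℚ yb p1
  have sw2_yb_p1 := iSwap ℚ yb p1
  have sw_yb_q1 := iSwaps ℚ yb q1
  have sw2_yb_q1 := iSwap ℚ yb q1
  have sw_yb_p2 := iSwaps ℚ yb p2
  have sw2_yb_p2 := iSwap ℚ yb p2
  have sw_yb_q2 := iSwaps ℚ yb q2
  have sw2_yb_q2 := iSwap ℚ yb q2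
  have sw_yb_xa := iSwaps ℚ yb xa
  have sw2_yb_xa := iSwap ℚ yb xa
  have sw_yb_ya := iSwaps ℚ yb ya
  have sw2_yb_ya := iSwap ℚ yb ya
  have sw_yb_xb := iSwaps ℚ yb xb
  have sw2_yb_xb := iSwap ℚ yb xb
  have sw_xc_p0 := iSwaps ℚ xc p0
  have sw2_xc_p0 := iSwap ℚ xc p0
  have sw_xc_q0 := iSwaps ℚ xc q0
  have sw2_xc_q0 := iSwap ℚ xc q0
  have sw_xc_p1 := iSwaps ℚ xc p1
  have sw2_xc_p1 := iSwap ℚ xc p1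
  have sw_xc_q1 := iSwaps ℚ xc q1
  have sw2_xc_q1 := iSwap ℚ xc q1
  have sw_xc_p2 := iSwaps ℚ xc p2
  have sw2_xc_p2 := iSwap ℚ xc p2
  have sw_xc_q2 := iSwaps ℚ xc q2
  have sw2_xc_q2 := iSwap ℚ xc q2
  have sw_xc_xa := iSwaps ℚ xc xa
  have sw2_xc_xa := iSwap ℚ xc xa
  have sw_xc_ya := iSwaps ℚ xc ya
  have sw2_xc_ya := iSwap ℚ xc ya
  have sw_xc_xb := iSwaps ℚ xc xb
  have sw2_xc_xb := iSwap ℚ xc xb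
  have sw_xc_yb := iSwaps ℚ xc yb
  have sw2_xc_yb := iSwap ℚ xc yb
  have sw_yc_p0 := iSwaps ℚ yc p0
  have sw2_yc_p0 := iSwap ℚ yc p0
  have sw_yc_q0 := iSwaps ℚ yc q0
  have sw2_yc_q0 := iSwap ℚ yc q0
  have sw_yc_p1 := iSwaps ℚ yc p1
  have sw2_yc_p1 := iSwap ℚ yc p1
  have sw_yc_q1 := iSwaps ℚ yc q1
  have sw2_yc_q1 := iSwap ℚ yc q1
  have sw_yc_p2 := iSwaps ℚ yc p2
  have sw2_yc_p2 := iSwap ℚ yc p2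
  have sw_yc_q2 := iSwaps ℚ yc q2
  have sw2_yc_q2 := iSwap ℚ yc q2
  have sw_yc_xa := iSwaps ℚ yc xa
  have sw2_yc_xa := iSwap ℚ yc xa
  have sw_yc_ya := iSwaps ℚ yc ya
  have sw2_yc_ya := iSwap ℚ yc ya
  have sw_yc_xb := iSwaps ℚ yc xb
  have sw2_yc_xb := iSwap ℚ yc xb
  have sw_yc_yb := iSwaps ℚ yc yb
  have sw2_yc_yb := iSwap ℚ yc yb
  have sw_yc_xc := iSwaps ℚ yc xc
  have sw2_yc_xc := iSwap ℚ yc xc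
  simp only [mul_sub, sub_mul, mul_add, add_mul, mul_assoc, mul_neg, neg_mul, neg_neg,
    sw_q0_p0, sw2_q0_p0, sw_p1_p0, sw2_p1_p0, sw_p1_q0, sw2_p1_q0, sw_q1_p0, sw2_q1_p0, sw_q1_q0, sw2_q1_q0, sw_q1_p1, sw2_q1_p1, sw_p2_p0, sw2_p2_p0, sw_p2_q0, sw2_p2_q0, sw_p2_p1, sw2_p2_p1, sw_p2_q1, sw2_p2_q1, sw_q2_p0, sw2_q2_p0, sw_q2_q0, sw2_q2_q0, sw_q2_p1, sw2_q2_p1, sw_q2_q1, sw2_q2_q1, sw_q2_p2, sw2_q2_p2, sw_xa_p0, sw2_xa_p0, sw_xa_q0, sw2_xa_q0, sw_xa_p1, sw2_xa_p1, sw_xa_q1, sw2_xa_q1, sw_xa_p2, sw2_xa_p2, sw_xa_q2, sw2_xa_q2, sw_ya_p0, sw2_ya_p0, sw_ya_q0, sw2_ya_q0, sw_ya_p1, sw2_ya_p1, sw_ya_q1, sw2_ya_q1, sw_ya_p2, sw2_ya_p2, sw_ya_q2, sw2_ya_q2, sw_ya_xa, sw2_ya_xa, sw_xb_p0, sw2_xb_p0,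 sw_xb_q0, sw2_xb_q0, sw_xb_p1, sw2_xb_p1, sw_xb_q1, sw2_xb_q1, sw_xb_p2, sw2_xb_p2, sw_xb_q2, sw2_xb_q2, sw_xb_xa, sw2_xb_xa, sw_xb_ya, sw2_xb_ya, sw_yb_p0, sw2_yb_p0, sw_yb_q0, sw2_yb_q0, sw_yb_p1, sw2_yb_p1, sw_yb_q1, sw2_yb_q1, sw_yb_p2, sw2_yb_p2, sw_yb_q2, sw2_yb_q2, sw_yb_xa, sw2_yb_xa, sw_yb_ya, sw2_yb_ya, sw_yb_xb, sw2_yb_xb, sw_xc_p0, sw2_xc_p0, sw_xc_q0, sw2_xc_q0, sw_xc_p1, sw2_xc_p1, sw_xc_q1, sw2_xc_q1, sw_xc_p2, sw2_xc_p2, sw_xc_q2, sw2_xc_q2, sw_xc_xa, sw2_xc_xa, sw_xc_ya, sw2_xc_ya, sw_xc_xb, sw2_xc_xb, sw_xc_yb, sw2_xc_yb, sw_yc_p0, sw2_yc_p0, sw_yc_q0, sw2_yc_q0, sw_yc_p1, sw2_yc_p1, sw_yc_q1, sw2_yc_q1, sw_yc_p2, sw2_yc_p2, sw_yc_q2, sw2_yc_q2,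 sw_yc_xa, sw2_yc_xa, sw_yc_ya, sw2_yc_ya, sw_yc_xb, sw2_yc_xb, sw_yc_yb, sw2_yc_yb, sw_yc_xc, sw2_yc_xc]
  abel

end Core

/-- Indices -/
def ee0 (k : ℕ) : Fin (k + 3) := ⟨0, by omega⟩
def ee1 (k : ℕ) : Fin (k + 3) := ⟨1, by omega⟩
def ee2 (k : ℕ) : Fin (k + 3) := ⟨2, by omega⟩

def tt01 (k : ℕ) : Equiv.Perm (Fin (k + 3)) := Equiv.swap (ee0 k) (ee1 k)
def tt02 (k : ℕ) : Equiv.Perm (Fin (k + 3)) := Equiv.swap (ee0 k) (ee2 k)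
def tt12 (k : ℕ) : Equiv.Perm (Fin (k + 3)) := Equiv.swap (ee1 k) (ee2 k)

noncomputable def dd (k : ℕ) (r c : Fin (k + 3)) : ExteriorAlgebra ℚ (Fin (4 * (k + 3)) → ℚ) :=
  egD (k + 3) (Fin.castLE (by omega) r) (⟨(k + 3) + c.val, by have := c.isLt; omega⟩ : Fin (2 * (k + 3)))

noncomputable def FF (k : ℕ) (s : Equiv.Perm (Fin (k + 3))) :
    ExteriorAlgebra ℚ (Fin (4 * (k + 3)) → ℚ) :=
  (List.ofFn fun r : Fin (k + 3) => dd k r (s r)).prod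

theorem hsplit (k : ℕ) {A : Type*} [Monoid A] (g : Fin (k + 3) → A) :
    (List.ofFn g).prod =
      g (ee0 k) * (g (ee1 k) * (g (ee2 k) *
        (List.ofFn fun i : Fin k => g ⟨i.val + 3, by omega⟩).prod)) := by
  simp only [List.ofFn_succ, List.prod_cons]
  have hg : ∀ (j1 j2 : Fin (k + 3)), j1 = j2 → g j1 = g j2 := fun _ _ h => by rw [h]
  refine congrArg₂ (· * ·) (hg _ _ ?_) (congrArg₂ (· * ·) (hg _ _ ?_)
    (congrArg₂ (· * ·) (hg _ _ ?_) ?_))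
  · exact Fin.ext (by simp [ee0])
  · exact Fin.ext (by simp [ee1, Fin.val_succ])
  · exact Fin.ext (by simp [ee2, Fin.val_succ])
  · refine congrArg _ (congrArg _ (funext fun i => hg _ _ ?_))
    exact Fin.ext (by simp [Fin.val_succ])

theorem key3 (k : ℕ) (T : ExteriorAlgebra ℚ (Fin (4 * (k + 3)) → ℚ)) (a b c : Fin (k + 3)) :
    dd k (ee0 k) a * (dd k (ee1 k) b * (dd k (ee2 k) c * T)) +
    dd k (ee0 k) b * (dd k (ee1 k) a * (dd k (ee2 k) c * T)) +
    dd k (ee0 k) c * (dd k (ee1 k) b * (dd k (ee2 k) a * T)) +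
    dd k (ee0 k) a * (dd k (ee1 k) c * (dd k (ee2 k) b * T)) +
    dd k (ee0 k) b * (dd k (ee1 k) c * (dd k (ee2 k) a * T)) +
    dd k (ee0 k) c * (dd k (ee1 k) a * (dd k (ee2 k) b * T)) = 0 := by
  have h : dd k (ee0 k) a * (dd k (ee1 k) b * dd k (ee2 k) c) +
      dd k (ee0 k) b * (dd k (ee1 k) a * dd k (ee2 k) c) +
      dd k (ee0 k) c * (dd k (ee1 k) b * dd k (ee2 k) a) +
      dd k (ee0 k) a * (dd k (ee1 k) c * dd k (ee2 k) b) +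
      dd k (ee0 k) b * (dd k (ee1 k) c * dd k (ee2 k) a) +
      dd k (ee0 k) c * (dd k (ee1 k) a * dd k (ee2 k) b) = 0 :=
    egCore _ _ _ _ _ _ _ _ _ _ _ _
  have h2 : dd k (ee0 k) a * (dd k (ee1 k) b * (dd k (ee2 k) c * T)) +
      dd k (ee0 k) b * (dd k (ee1 k) a * (dd k (ee2 k) c * T)) +
      dd k (ee0 k) c * (dd k (ee1 k) b * (dd k (ee2 k) a * T)) +
      dd k (ee0 k) a * (dd k (ee1 k) c * (dd k (ee2 k) b * T)) +
      dd k (ee0 k) b * (dd k (ee1 k) c * (dd k (ee2 k) a * T)) +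
      dd k (ee0 k) c * (dd k (ee1 k) a * (dd k (ee2 k) b * T)) =
      (dd k (ee0 k) a * (dd k (ee1 k) b * dd k (ee2 k) c) +
      dd k (ee0 k) b * (dd k (ee1 k) a * dd k (ee2 k) c) +
      dd k (ee0 k) c * (dd k (ee1 k) b * dd k (ee2 k) a) +
      dd k (ee0 k) a * (dd k (ee1 k) c * dd k (ee2 k) b) +
      dd k (ee0 k) b * (dd k (ee1 k) c * dd k (ee2 k) a) +
      dd k (ee0 k) c * (dd k (ee1 k) a * dd k (ee2 k) b)) * T := by
    simp only [add_mul, mul_assoc]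
  rw [h2, h, zero_mul]

theorem keylemma (k : ℕ) (s : Equiv.Perm (Fin (k + 3))) :
    FF k s + FF k (s * tt01 k) + FF k (s * tt02 k) + FF k (s * tt12 k) +
      FF k (s * (tt01 k * tt12 k)) + FF k (s * (tt12 k * tt01 k)) = 0 := by
  have h01 : (ee0 k) ≠ (ee1 k) := Fin.ne_of_val_ne (by simp [ee0, ee1])
  have h02 : (ee0 k) ≠ (ee2 k) := Fin.ne_of_val_ne (by simp [ee0, ee2])
  have h12 : (ee1 k) ≠ (ee2 k) := Fin.ne_of_val_ne (by simp [ee1, ee2])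
  have ha1 : tt01 k (ee0 k) = ee1 k := Equiv.swap_apply_left _ _
  have ha2 : tt01 k (ee1 k) = ee0 k := Equiv.swap_apply_right _ _
  have ha3 : tt01 k (ee2 k) = ee2 k :=
    Equiv.swap_apply_of_ne_of_ne (Ne.symm h02) (Ne.symm h12)
  have hb1 : tt02 k (ee0 k) = ee2 k := Equiv.swap_apply_left _ _
  have hb2 : tt02 k (ee2 k) = ee0 k := Equiv.swap_apply_right _ _
  have hb3 : tt02 k (ee1 k) = ee1 k :=
    Equiv.swap_apply_of_ne_of_ne (Ne.symm h01) h12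
  have hc1 : tt12 k (ee1 k) = ee2 k := Equiv.swap_apply_left _ _
  have hc2 : tt12 k (ee2 k) = ee1 k := Equiv.swap_apply_right _ _
  have hc3 : tt12 k (ee0 k) = ee0 k := Equiv.swap_apply_of_ne_of_ne h01 h02
  have hf01 : ∀ i : Fin k, tt01 k ⟨i.val + 3, by omega⟩ = ⟨i.val + 3, by omega⟩ :=
    fun i => Equiv.swap_apply_of_ne_of_ne (Fin.ne_of_val_ne (by simp [ee0]))
      (Fin.ne_of_val_ne (by simp [ee1]))
  have hf02 : ∀ i : Fin k, tt02 k ⟨i.val + 3, by omega⟩ = ⟨i.val + 3, by omega⟩ :=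
    fun i => Equiv.swap_apply_of_ne_of_ne (Fin.ne_of_val_ne (by simp [ee0]))
      (Fin.ne_of_val_ne (by simp [ee2]))
  have hf12 : ∀ i : Fin k, tt12 k ⟨i.val + 3, by omega⟩ = ⟨i.val + 3, by omega⟩ :=
    fun i => Equiv.swap_apply_of_ne_of_ne (Fin.ne_of_val_ne (by simp [ee1]))
      (Fin.ne_of_val_ne (by simp [ee2]))
  simp only [FF, hsplit, Equiv.Perm.mul_apply, ha1, ha2, ha3, hb1, hb2, hb3, hc1, hc2, hc3,
    hf01, hf02, hf12]
  exact key3 k _ (s (ee0 k)) (s (ee1 k)) (s (ee2 k))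


/-- For `m ≥ 3`, the sum over all bijections
`s : {1, …, m} → {m+1, …, 2m}` of the products `D_{1 s(1)} ∧ ⋯ ∧ D_{m s(m)}` vanishes in the
exterior algebra (cohomological realization of `∧^m V ≅ 0` for `m ≥ 3`, Corollary 2.7).
Here the bijections are parametrized by permutations `s` of `Fin m`, the index `r ∈ {1, …, m}`
is viewed inside `{1, …, 2m}` via `Fin.castLE`, and `s(r)` corresponds to `m + s r`. -/
theorem sum_perm_egD_eq_zero (m : ℕ) (hm : 3 ≤ m) :
    ∑ s : Equiv.Perm (Fin m),
      (List.ofFn fun r : Fin m =>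
        egD m (Fin.castLE (by omega) r)
          (⟨m + (s r).val, by have := (s r).isLt; omega⟩ : Fin (2 * m))).prod = 0 := by
  obtain ⟨k, rfl⟩ : ∃ k, m = k + 3 := ⟨m - 3, by omega⟩
  show ∑ s : Equiv.Perm (Fin (k + 3)), FF k s = 0
  have h6 : ∀ τ : Equiv.Perm (Fin (k + 3)),
      ∑ s : Equiv.Perm (Fin (k + 3)), FF k (s * τ) = ∑ s : Equiv.Perm (Fin (k + 3)), FF k s :=
    fun τ => Fintype.sum_bijective (Equiv.mulRight τ) (Equiv.bijective _) _ _ (fun s => rfl)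
  have hz : ∑ s : Equiv.Perm (Fin (k + 3)),
      (FF k s + FF k (s * tt01 k) + FF k (s * tt02 k) + FF k (s * tt12 k) +
        FF k (s * (tt01 k * tt12 k)) + FF k (s * (tt12 k * tt01 k))) = 0 :=
    Finset.sum_eq_zero fun s _ => keylemma k s
  rw [Finset.sum_add_distrib, Finset.sum_add_distrib, Finset.sum_add_distrib,
    Finset.sum_add_distrib, Finset.sum_add_distrib, h6, h6, h6, h6, h6] at hz
  set S := ∑ s : Equiv.Perm (Fin (k + 3)), FF k s with hS
  have h7 : (6 : ℚ) • S = 0 := by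
    rw [show (6 : ℚ) = 1 + 1 + 1 + 1 + 1 + 1 by norm_num, add_smul, add_smul, add_smul,
      add_smul, add_smul, one_smul]
    exact hz
  exact (smul_eq_zero.mp h7).resolve_left (by norm_num)
end

section
/- Let n ≥ 1 and let Λ be the exterior algebra over ℚ on generators α₁, β₁, …, α_{2n}, β_{2n}, with P_i := α_i ∧ β_i and D_{rs} := α_r ∧ β_s − β_r ∧ α_s. The family of elements P_{i₁} ∧ ⋯ ∧ P_{i_p} ∧ D_{j₁k₁} ∧ ⋯ ∧ D_{j_qk_q} ∈ Λ, indexed by all data with p + q = n, the indices i₁ < ⋯ < i_p, j₁, …, j_q, k₁, …, k_q pairwise distinct elements of {1, …, 2n}, and satisfying the Gelfand–Zetlin condition j₁ < j₂ < ⋯ < j_q, k₁ < k₂ < ⋯ < k_q, and j_r < k_r for all r = 1, …, q, is linearly independent over ℚ. -/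
/-- Index data for a Gelfand–Zetlin monomial
`P_{i₁} ∧ ⋯ ∧ P_{i_p} ∧ D_{j₁k₁} ∧ ⋯ ∧ D_{j_qk_q}` with `p + q = n`: the indices
`i₁ < ⋯ < i_p, j₁, …, j_q, k₁, …, k_q` are pairwise distinct elements of `{1, …, 2n}` and
satisfy the Gelfand–Zetlin condition `j₁ < ⋯ < j_q`, `k₁ < ⋯ < k_q`, `j_r < k_r`. -/
structure GZIndex (n : ℕ) where
  p : ℕ
  q : ℕ
  hpq : p + q = n
  i : Fin p → Fin (2 * n)
  j : Fin q → Fin (2 * n)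
  k : Fin q → Fin (2 * n)
  imono : StrictMono i
  jmono : StrictMono j
  kmono : StrictMono k
  hjk : ∀ r, j r < k r
  hdistinct : Function.Injective (Sum.elim i (Sum.elim j k))

/-- The Gelfand–Zetlin monomial `P_{i₁} ∧ ⋯ ∧ P_{i_p} ∧ D_{j₁k₁} ∧ ⋯ ∧ D_{j_qk_q}`
attached to the index data `idx`. -/
noncomputable def gzMonomial (n : ℕ) (idx : GZIndex n) :
    ExteriorAlgebra ℚ (Fin (4 * n) → ℚ) :=
  (List.ofFn fun r : Fin idx.p => egP n (idx.i r)).prod *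
    (List.ofFn fun r : Fin idx.q => egD n (idx.j r) (idx.k r)).prod

open ExteriorAlgebra

theorem LinearIndependent.of_dual_triangular {ι R M α : Type*} [CommRing R] [NoZeroDivisors R]
    [AddCommGroup M] [Module R M] [LinearOrder α] (v : ι → M) (f : ι → Module.Dual R M)
    (w : ι → α) (hdiag : ∀ i, f i (v i) ≠ 0)
    (hlower : ∀ i j, j ≠ i → f i (v j) ≠ 0 → w j < w i) : LinearIndependent R v := by
  classical
  refine linearIndependent_iff'.mpr fun s g hrel i₀ hi₀ => ?_
  by_contra hg₀
  obtain ⟨i, hi, hmin⟩ :=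
    (s.filter fun j => g j ≠ 0).exists_min_image w ⟨i₀, Finset.mem_filter.mpr ⟨hi₀, hg₀⟩⟩
  rw [Finset.mem_filter] at hi
  have hother : ∀ j ∈ s, j ≠ i → g j * f i (v j) = 0 := by
    intro j hj hji
    by_contra h
    obtain ⟨hgj, hfj⟩ := mul_ne_zero_iff.mp h
    exact (hlower i j hji hfj).not_ge (hmin j (Finset.mem_filter.mpr ⟨hj, hgj⟩))
  have hfi := congr_arg (f i) hrel
  simp only [map_sum, map_smul, smul_eq_mul, map_zero] at hfi
  rw [Finset.sum_eq_single_of_mem i hi.1 hother] at hfi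
  exact mul_ne_zero hi.2 (hdiag i) hfi

theorem List.prod_ofFn_add {R : Type*} [Semiring R] {m : ℕ} (x y : Fin m → R) :
    (List.ofFn fun r => x r + y r).prod =
      ∑ ε : Fin m → Bool, (List.ofFn fun r => bif ε r then y r else x r).prod := by
  induction m with
  | zero => simp
  | succ m ih =>
    rw [← (Fin.consEquiv fun _ => Bool).sum_comp, Fintype.sum_prod_type, Fintype.sum_bool,
      List.ofFn_succ, List.prod_cons, ih, add_mul, Finset.mul_sum, Finset.mul_sum, add_comm]
    simp [Fin.consEquiv, List.ofFn_succ]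

namespace ExteriorAlgebra

variable {R M : Type*} [CommRing R] [AddCommGroup M] [Module R M] {k : ℕ}

noncomputable def pluckerCoord (φ : Fin k → Module.Dual R M) : ExteriorAlgebra R M →ₗ[R] R :=
  liftAlternating (Pi.single k (Matrix.detRowAlternating.compLinearMap (LinearMap.pi φ)))

theorem pluckerCoord_ιMulti (φ : Fin k → Module.Dual R M) (v : Fin k → M) :
    pluckerCoord φ (ιMulti R k v) = (Matrix.of fun r c => φ c (v r)).det := by
  rw [pluckerCoord, liftAlternating_apply_ιMulti, Pi.single_eq_same]
  rfl

theorem pluckerCoord_ιMulti_of_ne {m : ℕ} (φ : Fin k → Module.Dual R M) (v : Fin m → M)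
    (h : m ≠ k) : pluckerCoord φ (ιMulti R m v) = 0 := by
  rw [pluckerCoord, liftAlternating_apply_ιMulti, Pi.single_eq_of_ne h, AlternatingMap.zero_apply]

theorem prod_map_ι_mul_ι {α β : Type*} (l : List α) (f g : α → β) (v : β → M) :
    (l.map fun a => ι R (v (f a)) * ι R (v (g a))).prod =
      ((l.flatMap fun a => [f a, g a]).map fun b => ι R (v b)).prod := by
  induction l with
  | nil => simp
  | cons a l ih => simp [ih, mul_assoc]

variable {κ : Type*} [DecidableEq κ]

theorem mem_of_pluckerCoord_prod_single_ne_zero {l : List κ} {T : Fin k → κ}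
    (h : pluckerCoord (fun c => LinearMap.proj (T c))
      ((l.map fun t => ι R (Pi.single t (1 : R))).prod) ≠ 0) (c : Fin k) : T c ∈ l := by
  rw [← List.ofFn_getElem_eq_map, ← ιMulti_apply] at h
  by_cases hk : l.length = k
  · subst hk
    rw [pluckerCoord_ιMulti] at h
    by_contra hc
    refine h (Matrix.det_eq_zero_of_column_eq_zero c fun r => ?_)
    exact Pi.single_eq_of_ne (fun hr => hc (by rw [hr]; exact List.getElem_mem _)) _
  · exact absurd (pluckerCoord_ιMulti_of_ne _ _ hk) h

theorem pluckerCoord_prod_single_self {l : List κ} (hl : l.Nodup) :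
    pluckerCoord (fun c : Fin l.length => LinearMap.proj l[c])
      ((l.map fun t => ι R (Pi.single t (1 : R))).prod) = 1 := by
  rw [← List.ofFn_getElem_eq_map, ← ιMulti_apply, pluckerCoord_ιMulti]
  convert Matrix.det_one (n := Fin l.length) (R := R) using 2
  ext r c
  simp [Pi.single_apply, Matrix.one_apply, hl.getElem_inj_iff, Fin.ext_iff, eq_comm]

end ExteriorAlgebra

def alphaCoord (n : ℕ) (x : Fin (2 * n)) : Fin (4 * n) := Fin.castLE (by omega) x

def betaCoord (n : ℕ) (x : Fin (2 * n)) : Fin (4 * n) := ⟨2 * n + x, by omega⟩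

theorem alphaCoord_injective (n : ℕ) : Function.Injective (alphaCoord n) :=
  Fin.castLE_injective (by omega)

theorem betaCoord_injective (n : ℕ) : Function.Injective (betaCoord n) := fun x y h => by
  simpa [betaCoord, Fin.ext_iff] using h

theorem alphaCoord_ne_betaCoord {n : ℕ} (x y : Fin (2 * n)) : alphaCoord n x ≠ betaCoord n y := by
  rw [Ne, Fin.ext_iff]
  simp only [alphaCoord, betaCoord, Fin.val_castLE]
  omega

theorem egD_eq_add (n : ℕ) (x y : Fin (2 * n)) :
    egD n x y = egAlpha n x * egBeta n y + egAlpha n y * egBeta n x := by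
  rw [egD, sub_eq_add_neg]
  exact congr_arg _ (neg_eq_of_add_eq_zero_left (ι_add_mul_swap _ _))

namespace GZIndex

variable {n : ℕ} (idx : GZIndex n)

theorem i_ne_j (r : Fin idx.p) (s : Fin idx.q) : idx.i r ≠ idx.j s :=
  idx.hdistinct.ne (a₁ := .inl r) (a₂ := .inr (.inl s)) (by simp)

theorem i_ne_k (r : Fin idx.p) (s : Fin idx.q) : idx.i r ≠ idx.k s :=
  idx.hdistinct.ne (a₁ := .inl r) (a₂ := .inr (.inr s)) (by simp)

theorem j_ne_k (r s : Fin idx.q) : idx.j r ≠ idx.k s :=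
  idx.hdistinct.ne (a₁ := .inr (.inl r)) (a₂ := .inr (.inr s)) (by simp)

/-- `ε r = true` means that the factor `D_{j_r k_r}` contributes `α_{k_r} β_{j_r}` rather than
`α_{j_r} β_{k_r}`. -/
def alphaIdx (ε : Fin idx.q → Bool) : Fin idx.p ⊕ Fin idx.q → Fin (2 * n) :=
  Sum.elim idx.i fun r => bif ε r then idx.k r else idx.j r

def betaIdx (ε : Fin idx.q → Bool) : Fin idx.p ⊕ Fin idx.q → Fin (2 * n) :=
  idx.alphaIdx fun r => !ε r

theorem alphaIdx_injective (ε : Fin idx.q → Bool) : Function.Injective (idx.alphaIdx ε) := by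
  have hchoice : Function.Injective fun r => bif ε r then Sum.inr r else Sum.inl r := by
    intro r s h
    cases hr : ε r <;> cases hs : ε s <;> simp_all
  have hfactor : idx.alphaIdx ε = Sum.elim idx.i (Sum.elim idx.j idx.k) ∘
      Sum.map id fun r => bif ε r then .inr r else .inl r := by
    ext (r | r)
    · rfl
    · simp only [alphaIdx, Function.comp_apply, Sum.map_inr, Sum.elim_inr]
      cases ε r <;> rfl
  rw [hfactor]
  exact idx.hdistinct.comp (Sum.map_injective.mpr ⟨Function.injective_id, hchoice⟩)

theorem betaIdx_injective (ε : Fin idx.q → Bool) : Function.Injective (idx.betaIdx ε) :=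
  idx.alphaIdx_injective _

def alphaSupp (ε : Fin idx.q → Bool) : Finset (Fin (2 * n)) := Finset.univ.image (idx.alphaIdx ε)

def betaSupp (ε : Fin idx.q → Bool) : Finset (Fin (2 * n)) := Finset.univ.image (idx.betaIdx ε)

theorem card_alphaSupp (ε : Fin idx.q → Bool) : (idx.alphaSupp ε).card = n := by
  rw [alphaSupp, Finset.card_image_of_injective _ (idx.alphaIdx_injective ε), Finset.card_univ,
    Fintype.card_sum, Fintype.card_fin, Fintype.card_fin, idx.hpq]

theorem card_betaSupp (ε : Fin idx.q → Bool) : (idx.betaSupp ε).card = n :=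
  idx.card_alphaSupp _

theorem mem_alphaSupp_false {x : Fin (2 * n)} :
    x ∈ idx.alphaSupp (fun _ => false) ↔ x ∈ Set.range idx.i ∨ x ∈ Set.range idx.j := by
  simp [alphaSupp, alphaIdx]

theorem mem_betaSupp_false {x : Fin (2 * n)} :
    x ∈ idx.betaSupp (fun _ => false) ↔ x ∈ Set.range idx.i ∨ x ∈ Set.range idx.k := by
  simp [betaSupp, betaIdx, alphaIdx]

theorem range_i_eq : Set.range idx.i =
    {x | x ∈ idx.alphaSupp (fun _ => false) ∧ x ∈ idx.betaSupp (fun _ => false)} := by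
  ext x
  simp only [Set.mem_ofPred_eq, mem_alphaSupp_false, mem_betaSupp_false]
  constructor
  · intro h
    exact ⟨.inl h, .inl h⟩
  · rintro ⟨h | ⟨r, rfl⟩, h' | ⟨s, hs⟩⟩
    exacts [h, h, h', absurd hs.symm (idx.j_ne_k r s)]

theorem range_j_eq : Set.range idx.j =
    {x | x ∈ idx.alphaSupp (fun _ => false) ∧ x ∉ idx.betaSupp (fun _ => false)} := by
  ext x
  simp only [Set.mem_ofPred_eq, mem_alphaSupp_false, mem_betaSupp_false, not_or]
  constructor
  · rintro ⟨r, rfl⟩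
    exact ⟨.inr ⟨r, rfl⟩, fun ⟨s, hs⟩ => idx.i_ne_j s r hs, fun ⟨s, hs⟩ => idx.j_ne_k r s hs.symm⟩
  · rintro ⟨h | h, hi, -⟩
    exacts [absurd h hi, h]

theorem range_k_eq : Set.range idx.k =
    {x | x ∈ idx.betaSupp (fun _ => false) ∧ x ∉ idx.alphaSupp (fun _ => false)} := by
  ext x
  simp only [Set.mem_ofPred_eq, mem_alphaSupp_false, mem_betaSupp_false, not_or]
  constructor
  · rintro ⟨r, rfl⟩
    exact ⟨.inr ⟨r, rfl⟩, fun ⟨s, hs⟩ => idx.i_ne_k s r hs, fun ⟨s, hs⟩ => idx.j_ne_k s r hs⟩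
  · rintro ⟨h | h, hi, -⟩
    exacts [absurd h hi, h]

theorem ext_of_range : ∀ {idx idx' : GZIndex n}, Set.range idx.i = Set.range idx'.i →
    Set.range idx.j = Set.range idx'.j → Set.range idx.k = Set.range idx'.k → idx = idx'
  | ⟨p, q, hpq, i, j, k, hi, hj, hk, _, _⟩, ⟨p', q', hpq', i', j', k', hi', hj', hk', _, _⟩,
      hI, hJ, hK => by
    obtain rfl : p = p' := by
      simpa using (Nat.card_range_of_injective hi.injective).symm.trans
        ((congr_arg (fun s : Set _ => Nat.card s) hI).trans
          (Nat.card_range_of_injective hi'.injective))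
    obtain rfl : q = q' := by omega
    obtain rfl := (hi.range_inj hi').mp hI
    obtain rfl := (hj.range_inj hj').mp hJ
    obtain rfl := (hk.range_inj hk').mp hK
    rfl

theorem eq_of_supp_eq {idx idx' : GZIndex n}
    (hα : idx.alphaSupp (fun _ => false) = idx'.alphaSupp fun _ => false)
    (hβ : idx.betaSupp (fun _ => false) = idx'.betaSupp fun _ => false) : idx = idx' := by
  apply ext_of_range
  · rw [range_i_eq, range_i_eq, hα, hβ]
  · rw [range_j_eq, range_j_eq, hα, hβ]
  · rw [range_k_eq, range_k_eq, hα, hβ]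

def weight : ℕ := ∑ x ∈ idx.alphaSupp (fun _ => false), (x : ℕ)

theorem sum_alphaSupp (ε : Fin idx.q → Bool) : ∑ x ∈ idx.alphaSupp ε, (x : ℕ) =
    ∑ r, (idx.i r : ℕ) + ∑ r, ((bif ε r then idx.k r else idx.j r : Fin (2 * n)) : ℕ) := by
  rw [alphaSupp, Finset.sum_image fun _ _ _ _ h => idx.alphaIdx_injective ε h,
    Fintype.sum_sum_type]
  rfl

theorem weight_lt_sum_alphaSupp {ε : Fin idx.q → Bool} (hε : ε ≠ fun _ => false) :
    idx.weight < ∑ x ∈ idx.alphaSupp ε, (x : ℕ) := by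
  obtain ⟨r, hr⟩ : ∃ r, ε r = true := by simpa [funext_iff] using hε
  rw [weight, sum_alphaSupp, sum_alphaSupp]
  refine Nat.add_lt_add_left (Finset.sum_lt_sum (fun s _ => ?_) ⟨r, Finset.mem_univ r, ?_⟩) _
  · cases ε s
    exacts [le_rfl, (idx.hjk s).le]
  · simpa [hr] using idx.hjk r

theorem eq_of_supp_eq_of_weight_le {idx₀ idx : GZIndex n} {ε : Fin idx.q → Bool}
    (hα : idx.alphaSupp ε = idx₀.alphaSupp fun _ => false)
    (hβ : idx.betaSupp ε = idx₀.betaSupp fun _ => false) (hw : idx₀.weight ≤ idx.weight) :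
    idx = idx₀ ∧ ε = fun _ => false := by
  obtain rfl : ε = fun _ => false := by
    by_contra hε
    have hlt := idx.weight_lt_sum_alphaSupp hε
    rw [hα] at hlt
    exact (hlt.trans_le hw).false
  exact ⟨eq_of_supp_eq hα hβ, rfl⟩

def slots : List (Fin idx.p ⊕ Fin idx.q) := List.ofFn .inl ++ List.ofFn .inr

theorem mem_slots (s : Fin idx.p ⊕ Fin idx.q) : s ∈ idx.slots := by
  rcases s with r | r <;> simp [slots, List.mem_ofFn]

theorem nodup_slots : idx.slots.Nodup :=
  (List.nodup_ofFn.mpr Sum.inl_injective).append (List.nodup_ofFn.mpr Sum.inr_injective)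
    (by simp [List.disjoint_left, List.mem_ofFn])

def coords (ε : Fin idx.q → Bool) : List (Fin (4 * n)) :=
  idx.slots.flatMap fun s => [alphaCoord n (idx.alphaIdx ε s), betaCoord n (idx.betaIdx ε s)]

theorem alphaCoord_mem_coords {ε : Fin idx.q → Bool} {x : Fin (2 * n)} :
    alphaCoord n x ∈ idx.coords ε ↔ x ∈ idx.alphaSupp ε := by
  simp [coords, alphaSupp, mem_slots, (alphaCoord_injective n).eq_iff, alphaCoord_ne_betaCoord,
    eq_comm]

theorem betaCoord_mem_coords {ε : Fin idx.q → Bool} {x : Fin (2 * n)} :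
    betaCoord n x ∈ idx.coords ε ↔ x ∈ idx.betaSupp ε := by
  simp [coords, betaSupp, mem_slots, (betaCoord_injective n).eq_iff,
    (alphaCoord_ne_betaCoord _ _).symm, eq_comm]

theorem nodup_coords (ε : Fin idx.q → Bool) : (idx.coords ε).Nodup := by
  rw [coords, List.nodup_flatMap]
  refine ⟨fun s _ => by simp [alphaCoord_ne_betaCoord], idx.nodup_slots.pairwise_of_forall_ne
    fun s _ s' _ hss' => ?_⟩
  simp [Function.onFun, List.disjoint_left, (alphaCoord_injective n).eq_iff,
    (betaCoord_injective n).eq_iff, alphaCoord_ne_betaCoord, (alphaCoord_ne_betaCoord _ _).symm,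
    (idx.alphaIdx_injective ε).ne hss', (idx.betaIdx_injective ε).ne hss']

theorem gzMonomial_eq_sum : gzMonomial n idx =
    ∑ ε, ((idx.coords ε).map fun t => ι ℚ (Pi.single t 1)).prod := by
  have hterm : ∀ ε : Fin idx.q → Bool,
      ((idx.coords ε).map fun t => ι ℚ (Pi.single t 1)).prod =
        (List.ofFn fun r => egP n (idx.i r)).prod *
          (List.ofFn fun r => bif ε r then egAlpha n (idx.k r) * egBeta n (idx.j r)
            else egAlpha n (idx.j r) * egBeta n (idx.k r)).prod := by
    intro ε
    rw [coords, ← prod_map_ι_mul_ι, slots, List.map_append, List.prod_append, List.map_ofFn,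
      List.map_ofFn]
    congr 3 with r
    cases hr : ε r <;>
      simp only [Function.comp_apply, betaIdx, alphaIdx, Sum.elim_inr, hr, Bool.not_true,
        Bool.not_false, cond_true, cond_false] <;> rfl
  simp only [gzMonomial, egD_eq_add, List.prod_ofFn_add, Finset.mul_sum, hterm]

noncomputable def leadingCoord : Module.Dual ℚ (ExteriorAlgebra ℚ (Fin (4 * n) → ℚ)) :=
  pluckerCoord fun c : Fin (idx.coords fun _ => false).length =>
    LinearMap.proj (idx.coords fun _ => false)[c]

theorem supp_eq_of_leadingCoord_ne_zero {idx₀ idx : GZIndex n} {ε : Fin idx.q → Bool}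
    (h : idx₀.leadingCoord ((idx.coords ε).map fun t => ι ℚ (Pi.single t 1)).prod ≠ 0) :
    idx.alphaSupp ε = idx₀.alphaSupp (fun _ => false) ∧
      idx.betaSupp ε = idx₀.betaSupp fun _ => false := by
  have hsub : ∀ t ∈ idx₀.coords fun _ => false, t ∈ idx.coords ε := by
    intro t ht
    obtain ⟨c, hc, rfl⟩ := List.getElem_of_mem ht
    exact mem_of_pluckerCoord_prod_single_ne_zero h ⟨c, hc⟩
  constructor
  · refine (Finset.eq_of_subset_of_card_le (fun x hx => ?_) ?_).symm
    · exact idx.alphaCoord_mem_coords.mp (hsub _ (idx₀.alphaCoord_mem_coords.mpr hx))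
    · rw [card_alphaSupp, card_alphaSupp]
  · refine (Finset.eq_of_subset_of_card_le (fun x hx => ?_) ?_).symm
    · exact idx.betaCoord_mem_coords.mp (hsub _ (idx₀.betaCoord_mem_coords.mpr hx))
    · rw [card_betaSupp, card_betaSupp]

theorem leadingCoord_gzMonomial_self : idx.leadingCoord (gzMonomial n idx) = 1 := by
  rw [gzMonomial_eq_sum, map_sum, Finset.sum_eq_single (fun _ => false)]
  · exact pluckerCoord_prod_single_self (idx.nodup_coords _)
  · intro ε _ hε
    by_contra h
    obtain ⟨hα, hβ⟩ := supp_eq_of_leadingCoord_ne_zero h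
    exact hε (eq_of_supp_eq_of_weight_le hα hβ le_rfl).2
  · simp

theorem weight_lt_of_leadingCoord_ne_zero {idx₀ idx : GZIndex n} (hne : idx ≠ idx₀)
    (h : idx₀.leadingCoord (gzMonomial n idx) ≠ 0) : idx.weight < idx₀.weight := by
  rw [gzMonomial_eq_sum, map_sum] at h
  obtain ⟨ε, -, hε⟩ := Finset.exists_ne_zero_of_sum_ne_zero h
  obtain ⟨hα, hβ⟩ := supp_eq_of_leadingCoord_ne_zero hε
  by_contra! hw
  exact hne (eq_of_supp_eq_of_weight_le hα hβ hw).1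

end GZIndex

theorem gzMonomial_linearIndependent_general (n : ℕ) :
    LinearIndependent ℚ (gzMonomial n) :=
  LinearIndependent.of_dual_triangular _ GZIndex.leadingCoord GZIndex.weight
    (fun idx => by simp [GZIndex.leadingCoord_gzMonomial_self])
    fun _ _ hne h => GZIndex.weight_lt_of_leadingCoord_ne_zero hne h

/-- The family of Gelfand–Zetlin monomials is linearly independent over `ℚ`
(the realization statement underlying the direct sum `LZⁿ(E^{2n}, 0) = S ⊕ T`, Lemma 3.4). -/
theorem gzMonomial_linearIndependent (n : ℕ) (hn : 0 < n) :
    LinearIndependent ℚ (gzMonomial n) :=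
  gzMonomial_linearIndependent_general n
end
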